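/- Uniqueness of the optimal reweighting in the Gibbs variational formula: let ι be a nonempty finite type, let p : ι → ℝ be strictly positive probability weights on ι, let f : ι → ℝ, and let c > 0. Set Z = ∑_j p j * Real.exp (f j / c) and q* i = p i * Real.exp (f i / c) / Z. Then for every probability weights q on ι with q ≠ q*, one has ∑_i q i * f i − c * ∑_i q i * Real.log (q i / p i) < c * Real.log Z. -/

import Mathlib

/-!
Write `r` for the tilted weights `p i * exp (f i / c) / Z`. Since
`log (r i / p i) = f i / c - log Z`, the objective splits as `c * log Z - c * KL(q‖r)`,
and Gibbs' inequality `KL(q‖r) > 0` for `q ≠ r` finishes the proof.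
-/

open Finset Real InformationTheory

lemma mul_klFun_div {a b : ℝ} (hb : 0 < b) :
    b * klFun (a / b) = a * log (a / b) + b - a := by
  rw [klFun_apply]
  field_simp

lemma sum_mul_log_div_pos {ι : Type*} [Fintype ι] {q r : ι → ℝ} (hq : ∀ i, 0 ≤ q i)
    (hr : ∀ i, 0 < r i) (hqr : ∑ i, q i = ∑ i, r i) (hne : q ≠ r) :
    0 < ∑ i, q i * log (q i / r i) := by
  obtain ⟨i₀, hi₀⟩ := Function.ne_iff.mp hne
  have hKL : ∑ i, q i * log (q i / r i) = ∑ i, r i * klFun (q i / r i) := by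
    simp only [mul_klFun_div (hr _), sum_sub_distrib, sum_add_distrib, hqr, add_sub_cancel_right]
  rw [hKL]
  refine sum_pos' (fun i _ => mul_nonneg (hr i).le (klFun_nonneg (div_nonneg (hq i) (hr i).le)))
    ⟨i₀, mem_univ _, mul_pos (hr i₀) ?_⟩
  refine (klFun_nonneg (div_nonneg (hq i₀) (hr i₀).le)).lt_of_ne' fun h => hi₀ ?_
  rwa [klFun_eq_zero_iff (div_nonneg (hq i₀) (hr i₀).le), div_eq_one_iff_eq (hr i₀).ne'] at h

lemma mul_log_div_eq_mul_log_div_add {a b d : ℝ} (hb : b ≠ 0) (hd : d ≠ 0) :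
    a * log (a / b) = a * log (a / d) + a * log (d / b) := by
  rcases eq_or_ne a 0 with rfl | ha
  · simp
  · rw [← mul_add, ← log_mul (div_ne_zero ha hd) (div_ne_zero hd hb), div_mul_div_cancel₀ hd]

noncomputable def tiltedWeights {ι : Type*} [Fintype ι] (p f : ι → ℝ) (c : ℝ) : ι → ℝ :=
  fun i => p i * exp (f i / c) / ∑ j, p j * exp (f j / c)

section TiltedWeights

variable {ι : Type*} [Fintype ι] {p : ι → ℝ} (f : ι → ℝ)

lemma sum_mul_exp_pos [Nonempty ι] (c : ℝ) (hp : ∀ i, 0 < p i) :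
    0 < ∑ j, p j * exp (f j / c) :=
  sum_pos (fun i _ => mul_pos (hp i) (exp_pos _)) univ_nonempty

lemma tiltedWeights_pos [Nonempty ι] (c : ℝ) (hp : ∀ i, 0 < p i) (i : ι) :
    0 < tiltedWeights p f c i :=
  div_pos (mul_pos (hp i) (exp_pos _)) (sum_mul_exp_pos f c hp)

lemma sum_tiltedWeights [Nonempty ι] (c : ℝ) (hp : ∀ i, 0 < p i) :
    ∑ i, tiltedWeights p f c i = 1 := by
  simp only [tiltedWeights, ← sum_div]
  exact div_self (sum_mul_exp_pos f c hp).ne'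

lemma log_tiltedWeights_div [Nonempty ι] (c : ℝ) (hp : ∀ i, 0 < p i) (i : ι) :
    log (tiltedWeights p f c i / p i) = f i / c - log (∑ j, p j * exp (f j / c)) := by
  rw [tiltedWeights, div_right_comm, mul_div_cancel_left₀ _ (hp i).ne',
    log_div (exp_pos _).ne' (sum_mul_exp_pos f c hp).ne', log_exp]

lemma sum_mul_sub_mul_sum_mul_log_div [Nonempty ι] (hp : ∀ i, 0 < p i) {c : ℝ} (hc : c ≠ 0)
    {q : ι → ℝ} (hqs : ∑ i, q i = 1) :
    ∑ i, q i * f i - c * ∑ i, q i * log (q i / p i)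
      = c * log (∑ j, p j * exp (f j / c))
        - c * ∑ i, q i * log (q i / tiltedWeights p f c i) := by
  have hsplit : ∀ i, q i * log (q i / p i) = q i * log (q i / tiltedWeights p f c i)
      + (q i * f i / c - q i * log (∑ j, p j * exp (f j / c))) := fun i => by
    rw [mul_log_div_eq_mul_log_div_add (hp i).ne' (tiltedWeights_pos f c hp i).ne',
      log_tiltedWeights_div f c hp, mul_sub, mul_div_assoc]
  simp only [hsplit, sum_add_distrib, sum_sub_distrib, ← sum_div, ← sum_mul, hqs]
  field_simp
  ring

end TiltedWeights

theorem gibbs_tilted_weights_unique_general {ι : Type*} [Fintype ι] [Nonempty ι]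
    (p : ι → ℝ) (hp : ∀ i, 0 < p i)
    (f : ι → ℝ) (c : ℝ) (hc : 0 < c) :
    ∀ q : ι → ℝ, (∀ i, 0 ≤ q i) → (∑ i, q i = 1) →
      q ≠ (fun i => p i * Real.exp (f i / c) / (∑ j, p j * Real.exp (f j / c))) →
      ∑ i, q i * f i - c * ∑ i, q i * Real.log (q i / p i)
        < c * Real.log (∑ j, p j * Real.exp (f j / c)) := by
  intro q hq hqs hne
  have hKL : 0 < ∑ i, q i * log (q i / tiltedWeights p f c i) :=
    sum_mul_log_div_pos hq (tiltedWeights_pos f c hp)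
      (hqs.trans (sum_tiltedWeights f c hp).symm) hne
  rw [sum_mul_sub_mul_sum_mul_log_div f hp hc.ne' hqs]
  linarith [mul_pos hc hKL]

/-- Uniqueness of the optimal reweighting in the Gibbs variational formula:
any probability weights `q` different from the exponentially tilted weights
`q*` achieve a strictly smaller value than `c * Real.log Z`. -/
theorem gibbs_tilted_weights_unique {ι : Type*} [Fintype ι] [Nonempty ι]
    (p : ι → ℝ) (hp : ∀ i, 0 < p i) (hps : ∑ i, p i = 1)
    (f : ι → ℝ) (c : ℝ) (hc : 0 < c) :
    ∀ q : ι → ℝ, (∀ i, 0 ≤ q i) → (∑ i, q i = 1) →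
      q ≠ (fun i => p i * Real.exp (f i / c) / (∑ j, p j * Real.exp (f j / c))) →
      ∑ i, q i * f i - c * ∑ i, q i * Real.log (q i / p i)
        < c * Real.log (∑ j, p j * Real.exp (f j / c)) :=
  gibbs_tilted_weights_unique_general p hp f c hc
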